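/- arXiv:2306.00302 — 2 statements merged into one kernel-verified Lean document; each statement's English description precedes it below -/
import Mathlib

section
/- Let B_R ⊂ ℝ² be the open disk of radius R > 0 centered at the origin and let u ∈ C¹(cl B_R) be locally symmetric: B_R is the union of pairwise disjoint open annuli A_k = B_{R_k}(z_k) \ cl B_{r_k}(z_k) (z_k ∈ B_R, 0 ≤ r_k < R_k), on each of which u(x) = U_k(|x − z_k|) with U_k ∈ C¹([r_k, R_k]) and U_k' < 0 on (r_k, R_k), together with the set { x : ∇u(x) = 0 }. Assume in addition that u has exactly one critical point z in B_R (∇u(z) = 0 and ∇u(x) ≠ 0 for x ∈ B_R \ {z}). Then u is radially symmetric about z and radially strictly decreasing; in particular there is exactly one annulus in the decomposition, its center is z, its inner radius is 0, and its outer radius is R. -/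
/-!
Away from `z` there are no critical points, so the annuli cover the punctured disk
`B_R \ {z}` and lie inside `B_R`. The punctured disk is connected (dimension `2 > 1`), hence so is
the union of the annuli, which lies between it and its closure; disjoint open annuli then leave
room for only one annulus `A`. Its center lies in `B_R` but not in `A`, so it is `z`; `z` lies in
the closure of `A`, so the inner radius is `0`; then `A = B_R \ {z}` gives `B_{R_k}(z) = B_R` and,
comparing diameters, `R_k = R`. Finally `u(x) = U(|x - z|)` extends to `x = z` by continuity, and
`U` is strictly decreasing because `U' < 0`.
-/

open Set Metric Filter Topology

noncomputable section

/-- The plane `ℝ²`, realized as a Euclidean space. -/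
abbrev E2 : Type := EuclideanSpace ℝ (Fin 2)

theorem subset_closure_diff_singleton {X : Type*} [TopologicalSpace X] (z : X) [NeBot (𝓝[≠] z)]
    {s : Set X} (hs : IsOpen s) : s ⊆ closure (s \ {z}) :=
  (dense_compl_singleton z).open_subset_closure_inter hs

theorem Set.EqOn.of_diff_singleton {X Y : Type*} [TopologicalSpace X] [TopologicalSpace Y]
    [T2Space Y] {z : X} [NeBot (𝓝[≠] z)] {s : Set X} {f g : X → Y} (h : EqOn f g (s \ {z}))
    (hs : IsOpen s) (hf : ContinuousOn f s) (hg : ContinuousOn g s) : EqOn f g s :=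
  h.of_subset_closure hf hg sdiff_subset (subset_closure_diff_singleton z hs)

theorem IsPreconnected.subsingleton_of_pairwiseDisjoint {X ι : Type*} [TopologicalSpace X]
    {K : Set ι} {A : ι → Set X} (hK : IsPreconnected (⋃ k ∈ K, A k))
    (hA : ∀ k ∈ K, IsOpen (A k)) (hdisj : K.PairwiseDisjoint A)
    (hne : ∀ k ∈ K, (A k).Nonempty) : K.Subsingleton := by
  intro i hi j hj
  by_contra hij
  have hcover : ⋃ k ∈ K, A k ⊆ A i ∪ ⋃ k ∈ K \ {i}, A k := by
    refine iUnion₂_subset fun k hk => ?_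
    rcases eq_or_ne k i with rfl | hki
    · exact subset_union_left
    · exact subset_union_of_subset_right
        (subset_biUnion_of_mem (u := A) (show k ∈ K \ {i} from ⟨hk, hki⟩)) _
  have hsep : Disjoint (A i) (⋃ k ∈ K \ {i}, A k) :=
    disjoint_iUnion₂_right.2 fun k hk => hdisj hi hk.1 (Ne.symm hk.2)
  obtain ⟨x, hx⟩ := hne i hi
  have hKi : ⋃ k ∈ K, A k ⊆ A i :=
    hK.subset_left_of_subset_union (hA i hi) (isOpen_biUnion fun k hk => hA k hk.1) hsep hcover
      ⟨x, mem_biUnion hi hx, hx⟩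
  obtain ⟨y, hy⟩ := hne j hj
  exact (hdisj hi hj hij).ne_of_mem (hKi (mem_biUnion hj hy)) hy rfl

section NormedSpace

variable {E : Type*} [NormedAddCommGroup E] [NormedSpace ℝ E]

theorem joinedIn_diff_singleton_lineMap {s : Set E} (hs : Convex ℝ s) {z a : E}
    (ha : a ∈ s \ {z}) {t : ℝ} (ht : 0 < t) (hts : AffineMap.lineMap z a t ∈ s) :
    JoinedIn (s \ {z}) a (AffineMap.lineMap z a t) := by
  refine JoinedIn.of_segment_subset fun p hp => ⟨hs.segment_subset ha.1 hts hp, ?_⟩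
  have hseg : segment ℝ a (AffineMap.lineMap z a t) = AffineMap.lineMap z a '' segment ℝ 1 t := by
    rw [image_segment, AffineMap.lineMap_apply_one]
  rw [hseg] at hp
  obtain ⟨μ, hμ, rfl⟩ := hp
  have hμ : 0 < μ := by
    rw [segment_eq_uIcc] at hμ
    exact lt_of_lt_of_le (lt_min one_pos ht) hμ.1
  rw [mem_singleton_iff, ← dist_eq_zero, dist_lineMap_left]
  exact mul_ne_zero (norm_ne_zero_iff.2 hμ.ne') (dist_ne_zero.2 (Ne.symm ha.2))

theorem Convex.isPathConnected_diff_singleton (hE : 1 < Module.rank ℝ E) {s : Set E}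
    (hs : Convex ℝ s) {z : E} (hz : s ∈ 𝓝 z) : IsPathConnected (s \ {z}) := by
  obtain ⟨ρ, hρ, hρs⟩ := nhds_basis_closedBall.mem_iff.1 hz
  have hsphere : sphere z ρ ⊆ s \ {z} := fun x hx =>
    ⟨hρs (sphere_subset_closedBall hx), ne_of_mem_sphere hx hρ.ne'⟩
  have hjoin : ∀ a ∈ s \ {z}, ∃ b ∈ sphere z ρ, JoinedIn (s \ {z}) a b := by
    intro a ha
    have hza : 0 < dist z a := dist_pos.2 (Ne.symm ha.2)
    have hb : AffineMap.lineMap z a (ρ / dist z a) ∈ sphere z ρ := by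
      rw [mem_sphere, dist_lineMap_left, Real.norm_of_nonneg (div_pos hρ hza).le,
        div_mul_cancel₀ _ hza.ne']
    exact ⟨_, hb, joinedIn_diff_singleton_lineMap hs ha (div_pos hρ hza) (hsphere hb).1⟩
  have hS := isPathConnected_sphere hE z hρ.le
  obtain ⟨x, hx⟩ := hS.nonempty
  refine isPathConnected_iff.2 ⟨⟨x, hsphere hx⟩, fun a ha b hb => ?_⟩
  obtain ⟨a', ha', haa'⟩ := hjoin a ha
  obtain ⟨b', hb', hbb'⟩ := hjoin b hb
  exact haa'.trans (((hS.joinedIn a' ha' b' hb').mono hsphere).trans hbb'.symm)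

theorem Convex.exists_eq_singleton_of_isOpen_cover_diff_singleton
    (hE : 1 < Module.rank ℝ E) {s : Set E} (hs : Convex ℝ s) (hso : IsOpen s) {z : E}
    (hz : z ∈ s) {ι : Type*} {K : Set ι} {A : ι → Set E} (hA : ∀ k ∈ K, IsOpen (A k))
    (hdisj : K.PairwiseDisjoint A) (hne : ∀ k ∈ K, (A k).Nonempty)
    (h₁ : s \ {z} ⊆ ⋃ k ∈ K, A k) (h₂ : ⋃ k ∈ K, A k ⊆ s) : ∃ k, K = {k} := by
  have : Nontrivial E := rank_pos_iff_nontrivial.1 (zero_lt_one.trans hE)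
  have hS := hs.isPathConnected_diff_singleton hE (hso.mem_nhds hz)
  have hT : IsPreconnected (⋃ k ∈ K, A k) :=
    hS.isConnected.isPreconnected.subset_closure h₁
      (h₂.trans (subset_closure_diff_singleton z hso))
  obtain ⟨x, hx⟩ := hS.nonempty
  obtain ⟨k, hk, -⟩ := mem_iUnion₂.1 (h₁ hx)
  exact ⟨k, (hT.subsingleton_of_pairwiseDisjoint hA hdisj hne).eq_singleton_of_mem hk⟩

theorem radial_and_strictAnti_of_eqOn_punctured_ball [Nontrivial E] {u : E → ℝ} {U U' : ℝ → ℝ}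
    {z : E} {R : ℝ} (hu : ContinuousOn u (ball z R))
    (hU : ∀ r ∈ Icc 0 R, HasDerivWithinAt U (U' r) (Icc 0 R) r) (hU' : ∀ r ∈ Ioo 0 R, U' r < 0)
    (h : ∀ x ∈ ball z R \ {z}, u x = U ‖x - z‖) :
    (∀ x ∈ ball z R, ∀ y ∈ ball z R, ‖x - z‖ = ‖y - z‖ → u x = u y) ∧
    (∀ x ∈ ball z R, ∀ y ∈ ball z R, ‖x - z‖ < ‖y - z‖ → u y < u x) := by
  have hUcont : ContinuousOn U (Icc 0 R) := fun r hr => (hU r hr).continuousWithinAt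
  have hanti : StrictAntiOn U (Icc 0 R) :=
    strictAntiOn_of_hasDerivWithinAt_neg (convex_Icc 0 R) hUcont
      (fun r hr => (hU r (interior_subset hr)).mono interior_subset)
      (fun r hr => hU' r (by simpa using hr))
  have hnorm : MapsTo (fun x => ‖x - z‖) (ball z R) (Icc 0 R) :=
    fun x hx => ⟨norm_nonneg _, (mem_ball_iff_norm.1 hx).le⟩
  have hu_eq : EqOn u (fun x => U ‖x - z‖) (ball z R) :=
    Set.EqOn.of_diff_singleton h isOpen_ball hu (hUcont.comp (by fun_prop) hnorm)
  refine ⟨fun x hx y hy hxy => ?_, fun x hx y hy hxy => ?_⟩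
  · rw [hu_eq hx, hu_eq hy]
    exact congrArg U hxy
  · rw [hu_eq hx, hu_eq hy]
    exact hanti (hnorm hx) (hnorm hy) hxy

end NormedSpace

section Annulus

variable {X : Type*} [MetricSpace X]

def annulus (c : X) (r R : ℝ) : Set X := ball c R \ closedBall c r

theorem isOpen_annulus (c : X) (r R : ℝ) : IsOpen (annulus c r R) :=
  isOpen_ball.sdiff isClosed_closedBall

theorem annulus_nonempty {E : Type*} [NormedAddCommGroup E] [NormedSpace ℝ E] [Nontrivial E]
    (c : E) {r R : ℝ} (hr : 0 ≤ r) (hrR : r < R) : (annulus c r R).Nonempty := by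
  obtain ⟨x, hx⟩ := NormedSpace.sphere_nonempty (x := c).2 (by linarith : 0 ≤ (r + R) / 2)
  refine ⟨x, ?_, ?_⟩
  · rw [mem_ball, mem_sphere.1 hx]; linarith
  · rw [mem_closedBall, mem_sphere.1 hx, not_le]; linarith

theorem closure_annulus_subset (c : X) (r R : ℝ) : closure (annulus c r R) ⊆ (ball c r)ᶜ :=
  closure_minimal (fun _ hx hxr => hx.2 (ball_subset_closedBall hxr)) isOpen_ball.isClosed_compl

theorem annulus_zero (c : X) (R : ℝ) : annulus c 0 R = ball c R \ {c} := by
  rw [annulus, closedBall_zero]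

theorem eq_and_ball_eq_of_diff_singleton_subset_annulus {s : Set X} (hs : IsOpen s) {c z : X}
    [NeBot (𝓝[≠] z)] {r R : ℝ} (hc : c ∈ s) (hz : z ∈ s) (hr : 0 ≤ r)
    (h₁ : s \ {z} ⊆ annulus c r R) (h₂ : annulus c r R ⊆ s) :
    c = z ∧ r = 0 ∧ ball z R = s := by
  obtain rfl : c = z := by
    by_contra hcz
    exact (h₁ ⟨hc, hcz⟩).2 (mem_closedBall_self hr)
  have hcl : c ∈ closure (annulus c r R) := closure_mono h₁ (subset_closure_diff_singleton c hs hz)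
  obtain rfl : r = 0 := by
    have := closure_annulus_subset c r R hcl
    simp only [mem_compl_iff, mem_ball, dist_self, not_lt] at this
    linarith
  rw [annulus_zero] at h₁ h₂ hcl
  have hR : 0 < R := by
    obtain ⟨x, hx⟩ := (mem_closure_iff_nhds.1 hcl) univ univ_mem
    exact dist_nonneg.trans_lt hx.2.1
  refine ⟨rfl, rfl, ?_⟩
  have hpunct : s \ {c} = ball c R \ {c} :=
    h₁.antisymm fun x hx => ⟨h₂ hx, hx.2⟩
  rw [← insert_eq_of_mem hc, ← insert_eq_of_mem (mem_ball_self hR), ← insert_sdiff_singleton,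
    ← insert_sdiff_singleton (s := s), hpunct]

end Annulus

theorem locally_symmetric_unique_critical_point_radial_general
    (R : ℝ) (hR : 0 < R)
    (u : E2 → ℝ)
    (hu : ContDiffOn ℝ 1 u (closure (ball (0 : E2) R)))
    (K : Set ℕ) (c : ℕ → E2) (r₀ R₀ : ℕ → ℝ) (U U' : ℕ → ℝ → ℝ)
    (hannuli : ∀ k ∈ K, c k ∈ ball (0 : E2) R ∧ 0 ≤ r₀ k ∧ r₀ k < R₀ k)
    -- the annuli A_k are pairwise disjoint
    (hdisj : K.PairwiseDisjoint fun k => ball (c k) (R₀ k) \ closedBall (c k) (r₀ k))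
    -- B_R is covered by the annuli together with the critical set of u
    (hcover : ball (0 : E2) R =
      (⋃ k ∈ K, ball (c k) (R₀ k) \ closedBall (c k) (r₀ k)) ∪
        {x ∈ ball (0 : E2) R | gradient u x = 0})
    -- u(x) = U_k(|x - z_k|) on A_k, with U_k ∈ C¹([r_k, R_k]) (derivative U'_k)
    (hradial : ∀ k ∈ K,
      (∀ r ∈ Icc (r₀ k) (R₀ k), HasDerivWithinAt (U k) (U' k r) (Icc (r₀ k) (R₀ k)) r) ∧
      ContinuousOn (U' k) (Icc (r₀ k) (R₀ k)) ∧
      ∀ x ∈ ball (c k) (R₀ k) \ closedBall (c k) (r₀ k), u x = U k ‖x - c k‖)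
    -- U_k' < 0 on (r_k, R_k)
    (hdec : ∀ k ∈ K, ∀ r ∈ Ioo (r₀ k) (R₀ k), U' k r < 0)
    -- z is the unique critical point of u in B_R
    (z : E2) (hz : z ∈ ball (0 : E2) R)
    (hcrit : ∀ x ∈ ball (0 : E2) R, x ≠ z → gradient u x ≠ 0) :
    -- u is radially symmetric about z and radially strictly decreasing,
    (∀ x ∈ ball (0 : E2) R, ∀ y ∈ ball (0 : E2) R, ‖x - z‖ = ‖y - z‖ → u x = u y) ∧
    (∀ x ∈ ball (0 : E2) R, ∀ y ∈ ball (0 : E2) R, ‖x - z‖ < ‖y - z‖ → u y < u x) ∧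
    -- and there is exactly one annulus: centered at z, inner radius 0, outer radius R
    (∃! k, k ∈ K) ∧ (∀ k ∈ K, c k = z ∧ r₀ k = 0 ∧ R₀ k = R) := by
  have hsub : ball (0 : E2) R \ {z} ⊆ ⋃ k ∈ K, annulus (c k) (r₀ k) (R₀ k) := by
    rintro x ⟨hx, hxz⟩
    rw [hcover] at hx
    exact hx.resolve_right fun hx' => hcrit x hx'.1 hxz hx'.2
  have hsup : ⋃ k ∈ K, annulus (c k) (r₀ k) (R₀ k) ⊆ ball (0 : E2) R :=
    hcover ▸ subset_union_left
  obtain ⟨k, rfl⟩ := (convex_ball (0 : E2) R).exists_eq_singleton_of_isOpen_cover_diff_singleton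
    (Module.one_lt_rank_of_one_lt_finrank (by simp)) isOpen_ball hz
    (fun k _ => isOpen_annulus _ _ _) hdisj
    (fun k hk => annulus_nonempty _ (hannuli k hk).2.1 (hannuli k hk).2.2) hsub hsup
  rw [biUnion_singleton] at hsub hsup
  obtain ⟨hck, hr₀, hr₀R₀⟩ := hannuli k rfl
  obtain ⟨hc, hr, hball⟩ :=
    eq_and_ball_eq_of_diff_singleton_subset_annulus isOpen_ball hck hz hr₀ hsub hsup
  have hRk : R₀ k = R := by
    have hdiam := congrArg diam hball
    rwa [diam_ball_eq _ (hr₀.trans_lt hr₀R₀).le, diam_ball_eq _ hR.le,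
      mul_right_inj' two_ne_zero] at hdiam
  obtain ⟨hderiv, -, hrad⟩ := hradial k rfl
  have hdec' := hdec k rfl
  rw [hr, hRk] at hderiv hdec'
  rw [hc, hr, hRk, closedBall_zero] at hrad
  rw [hRk] at hball
  rw [← hball]
  obtain ⟨hsymm, hanti⟩ := radial_and_strictAnti_of_eqOn_punctured_ball
    (hball ▸ hu.continuousOn.mono subset_closure) hderiv hdec' hrad
  exact ⟨hsymm, hanti, ⟨k, rfl, fun j hj => hj⟩, fun j hj => hj ▸ ⟨hc, hr, hRk⟩⟩

/-- **Deduction step of the main theorem.** If `u ∈ C¹(cl B_R)` is locally symmetric in the disk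
`B_R ⊆ ℝ²` — i.e. `B_R` is the union of pairwise disjoint open annuli
`A_k = B_{R_k}(z_k) \ cl B_{r_k}(z_k)`, on each of which `u(x) = U_k(|x - z_k|)` with
`U_k ∈ C¹([r_k, R_k])` and `U_k' < 0` on `(r_k, R_k)`, together with the critical set
`{∇u = 0}` — and if `u` has exactly one critical point `z` in `B_R`, then `u` is radially
symmetric about `z` and radially strictly decreasing; in particular there is exactly one annulus
in the decomposition, its center is `z`, its inner radius is `0` and its outer radius is `R`. -/
theorem locally_symmetric_unique_critical_point_radial
    (R : ℝ) (hR : 0 < R)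
    (u : E2 → ℝ)
    (hu : ContDiffOn ℝ 1 u (closure (ball (0 : E2) R)))
    (K : Set ℕ) (c : ℕ → E2) (r₀ R₀ : ℕ → ℝ) (U U' : ℕ → ℝ → ℝ)
    (hannuli : ∀ k ∈ K, c k ∈ ball (0 : E2) R ∧ 0 ≤ r₀ k ∧ r₀ k < R₀ k)
    -- the annuli A_k are pairwise disjoint
    (hdisj : K.PairwiseDisjoint fun k => ball (c k) (R₀ k) \ closedBall (c k) (r₀ k))
    -- B_R is covered by the annuli together with the critical set of u
    (hcover : ball (0 : E2) R =
      (⋃ k ∈ K, ball (c k) (R₀ k) \ closedBall (c k) (r₀ k)) ∪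
        {x ∈ ball (0 : E2) R | gradient u x = 0})
    -- u(x) = U_k(|x - z_k|) on A_k, with U_k ∈ C¹([r_k, R_k]) (derivative U'_k)
    (hradial : ∀ k ∈ K,
      (∀ r ∈ Icc (r₀ k) (R₀ k), HasDerivWithinAt (U k) (U' k r) (Icc (r₀ k) (R₀ k)) r) ∧
      ContinuousOn (U' k) (Icc (r₀ k) (R₀ k)) ∧
      ∀ x ∈ ball (c k) (R₀ k) \ closedBall (c k) (r₀ k), u x = U k ‖x - c k‖)
    -- U_k' < 0 on (r_k, R_k)
    (hdec : ∀ k ∈ K, ∀ r ∈ Ioo (r₀ k) (R₀ k), U' k r < 0)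
    -- z is the unique critical point of u in B_R
    (z : E2) (hz : z ∈ ball (0 : E2) R) (hzcrit : gradient u z = 0)
    (hcrit : ∀ x ∈ ball (0 : E2) R, x ≠ z → gradient u x ≠ 0) :
    -- u is radially symmetric about z and radially strictly decreasing,
    (∀ x ∈ ball (0 : E2) R, ∀ y ∈ ball (0 : E2) R, ‖x - z‖ = ‖y - z‖ → u x = u y) ∧
    (∀ x ∈ ball (0 : E2) R, ∀ y ∈ ball (0 : E2) R, ‖x - z‖ < ‖y - z‖ → u y < u x) ∧
    -- and there is exactly one annulus: centered at z, inner radius 0, outer radius R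
    (∃! k, k ∈ K) ∧ (∀ k ∈ K, c k = z ∧ r₀ k = 0 ∧ R₀ k = R) :=
  locally_symmetric_unique_critical_point_radial_general R hR u hu K c r₀ R₀ U U' hannuli hdisj
    hcover hradial hdec z hz hcrit
end
end

section
/- Let D ⊂ ℝ² be the open disk of radius R > 0 centered at the origin, let v ∈ C²(cl D) solve the stationary 2D Euler equations in D with v·n = 0 on ∂D, assume v has a unique stagnation point z ∈ D, and let u ∈ C³(cl D) be the stream function of v, normalized so that u = 0 on ∂D and 0 < u < u(z) in D \ {z}. Then the vorticity Δu is constant on the boundary circle ∂D: there is d ∈ ℝ with Δu(x) = d for all x ∈ ∂D. -/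
open Set Metric Filter Topology

noncomputable section

/-- The `i`-th standard basis vector of `ℝ²`. -/
def e2 (i : Fin 2) : E2 := EuclideanSpace.single i (1 : ℝ)

/-- The partial derivative `∂ᵢ f` of a scalar function on `ℝ²`. -/
def pd (i : Fin 2) (f : E2 → ℝ) (x : E2) : ℝ := fderiv ℝ f x (e2 i)

/-- The partial derivative `∂ᵢ f` within a set `s` (used for functions of class `Cᵏ` up to the
boundary of `s`). -/
def pdW (s : Set E2) (i : Fin 2) (f : E2 → ℝ) (x : E2) : ℝ := fderivWithin ℝ f s x (e2 i)

/-- The Laplacian `Δf = ∂₁₁f + ∂₂₂f`, computed with derivatives within `s`. -/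
def lapW (s : Set E2) (f : E2 → ℝ) (x : E2) : ℝ := ∑ i, pdW s i (pdW s i f) x


/-!
Write `ω = Δu`; inside the disk `ω = curl v`, and the curl of the momentum equation together
with `div v = 0` gives `Dω · v = 0`, which persists up to the boundary by continuity. Let
`g(θ) = ω(R cos θ, R sin θ)`. Where `v ≠ 0` on the circle, `v` is tangent, so `g' = 0`. Where `v`
vanishes on an arc, the Hessian of `u` kills the tangent direction and is symmetric, so
`Dv(x) x = ω(x) rot x`; dividing `v` by the distance along the inward radius and passing to the
limit in `Dω · v = 0` gives `ω g' = 0` there. Now if `g'(θ₀) ≠ 0`, then `g' ≠ 0` near `θ₀`, so `v`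
vanishes on an arc around `θ₀`, hence so does `g`, and `g'(θ₀) = 0` after all. Thus `g' ≡ 0`.
-/

lemma E2.ext_of_apply {a b : E2} (h0 : a 0 = b 0) (h1 : a 1 = b 1) : a = b := by
  ext j; fin_cases j; exacts [h0, h1]

lemma e2_apply (i j : Fin 2) : e2 i j = if j = i then 1 else 0 := by
  simp [e2]

lemma eq_add_smul_e2 (y : E2) : y = y 0 • e2 0 + y 1 • e2 1 :=
  E2.ext_of_apply (by simp [e2_apply]) (by simp [e2_apply])

lemma ContinuousLinearMap.apply_E2 {F : Type*} [NormedAddCommGroup F] [NormedSpace ℝ F]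
    (L : E2 →L[ℝ] F) (y : E2) : L y = y 0 • L (e2 0) + y 1 • L (e2 1) := by
  conv_lhs => rw [eq_add_smul_e2 y]
  simp only [map_add, map_smul]

lemma ContinuousLinearMap.ext_E2 {F : Type*} [NormedAddCommGroup F] [NormedSpace ℝ F]
    {L M : E2 →L[ℝ] F} (h0 : L (e2 0) = M (e2 0)) (h1 : L (e2 1) = M (e2 1)) : L = M := by
  ext y; rw [L.apply_E2, M.apply_E2, h0, h1]

lemma pd_mul {f g : E2 → ℝ} {x : E2} (hf : DifferentiableAt ℝ f x) (hg : DifferentiableAt ℝ g x)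
    (i : Fin 2) : pd i (fun y => f y * g y) x = pd i f x * g x + f x * pd i g x := by
  simp only [pd, fderiv_fun_mul hf hg, add_apply, smul_apply, smul_eq_mul]
  ring

lemma ContDiffAt.differentiableAt_pd {f : E2 → ℝ} {x : E2} (hf : ContDiffAt ℝ 2 f x) (i : Fin 2) :
    DifferentiableAt ℝ (pd i f) x :=
  ((hf.fderiv_right (m := 1) le_rfl).clm_apply contDiffAt_const).differentiableAt one_ne_zero

theorem pd_comm_of_pd_eq {f : E2 → ℝ} {g : Fin 2 → E2 → ℝ} {x : E2}
    (hf : ∀ᶠ y in 𝓝 x, DifferentiableAt ℝ f y ∧ ∀ i, pd i f y = g i y)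
    (hg : ∀ i, DifferentiableAt ℝ (g i) x) : pd 1 (g 0) x = pd 0 (g 1) x := by
  let proj : Fin 2 → E2 →L[ℝ] ℝ := fun i => EuclideanSpace.proj i
  have hf' : ∀ᶠ y in 𝓝 x, HasFDerivAt f (g 0 y • proj 0 + g 1 y • proj 1) y := by
    filter_upwards [hf] with y ⟨hdiff, hpd⟩
    convert hdiff.hasFDerivAt using 1
    apply ContinuousLinearMap.ext_E2 <;> simp [proj, ← hpd, pd, e2_apply]
  have hsymm := second_derivative_symmetric_of_eventually hf'
    (((hg 0).hasFDerivAt.smul_const (proj 0)).add ((hg 1).hasFDerivAt.smul_const (proj 1)))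
    (e2 1) (e2 0)
  simpa [proj, pd, e2_apply] using hsymm

theorem pd_comm {f : E2 → ℝ} {x : E2} (hf : ContDiffAt ℝ 2 f x) :
    pd 1 (pd 0 f) x = pd 0 (pd 1 f) x :=
  pd_comm_of_pd_eq
    ((hf.eventually (by simp)).mono fun _ hy => ⟨hy.differentiableAt two_ne_zero, fun _ => rfl⟩)
    hf.differentiableAt_pd

def curl (v : E2 → E2) (x : E2) : ℝ := pd 0 (fun y => v y 1) x - pd 1 (fun y => v y 0) x

/-- Vorticity transport: the curl of the momentum equation, simplified with `div v = 0`. -/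
theorem fderiv_curl_apply_self {U : Set E2} (hU : IsOpen U) {v : E2 → E2} {P : E2 → ℝ}
    (hv : ContDiffOn ℝ 2 v U) (hP : DifferentiableOn ℝ P U)
    (momentum : ∀ x ∈ U, ∀ i : Fin 2, ∑ j, v x j * pd j (fun y => v y i) x = -pd i P x)
    (incomp : ∀ x ∈ U, ∑ i, pd i (fun y => v y i) x = 0) {x : E2} (hx : x ∈ U) :
    fderiv ℝ (curl v) x (v x) = 0 := by
  have hvi : ∀ i : Fin 2, ∀ y ∈ U, ContDiffAt ℝ 2 (fun y => v y i) y := fun i y hy =>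
    (EuclideanSpace.proj (𝕜 := ℝ) i).contDiff.contDiffAt.comp y (hv.contDiffAt (hU.mem_nhds hy))
  have hvi' : ∀ i : Fin 2, ∀ y ∈ U, DifferentiableAt ℝ (fun y => v y i) y := fun i y hy =>
    (hvi i y hy).differentiableAt two_ne_zero
  have hprod : ∀ i j, DifferentiableAt ℝ (fun y => v y j * pd j (fun y => v y i) y) x :=
    fun i j => (hvi' j x hx).mul ((hvi i x hx).differentiableAt_pd j)
  -- the convective term `(v·∇)v`, which is the gradient of `-P`
  let Q : Fin 2 → E2 → ℝ := fun i y =>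
    v y 0 * pd 0 (fun y => v y i) y + v y 1 * pd 1 (fun y => v y i) y
  have hQ : ∀ i k, pd k (Q i) x =
      pd k (fun y => v y 0) x * pd 0 (fun y => v y i) x
        + v x 0 * pd k (pd 0 (fun y => v y i)) x
      + (pd k (fun y => v y 1) x * pd 1 (fun y => v y i) x
        + v x 1 * pd k (pd 1 (fun y => v y i)) x) := by
    intro i k
    rw [pd, fderiv_fun_add (hprod i 0) (hprod i 1), add_apply, ← pd, ← pd,
      pd_mul (hvi' 0 x hx) ((hvi i x hx).differentiableAt_pd 0),
      pd_mul (hvi' 1 x hx) ((hvi i x hx).differentiableAt_pd 1)]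
  have hQ_comm : pd 1 (Q 0) x = pd 0 (Q 1) x := by
    refine pd_comm_of_pd_eq (f := fun y => -P y) ?_ ?_
    · filter_upwards [hU.mem_nhds hx] with y hy
      refine ⟨(hP.differentiableAt (hU.mem_nhds hy)).neg, fun i => ?_⟩
      simpa [pd, Q, Fin.sum_univ_two] using (momentum y hy i).symm
    · exact fun i => (hprod i 0).add (hprod i 1)
  have hcurl : ∀ k, pd k (curl v) x =
      pd k (pd 0 (fun y => v y 1)) x - pd k (pd 1 (fun y => v y 0)) x := fun k => by
    unfold curl
    rw [pd, fderiv_fun_sub ((hvi 1 x hx).differentiableAt_pd 0)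
      ((hvi 0 x hx).differentiableAt_pd 1)]
    rfl
  have hdiv : pd 0 (fun y => v y 0) x + pd 1 (fun y => v y 1) x = 0 := by
    simpa [Fin.sum_univ_two] using incomp x hx
  rw [ContinuousLinearMap.apply_E2, ← pd, ← pd, hcurl, hcurl]
  rw [hQ, hQ] at hQ_comm
  have h0 := pd_comm (hvi 0 x hx)
  have h1 := pd_comm (hvi 1 x hx)
  simp only [smul_eq_mul]
  linear_combination -hQ_comm + v x 0 * h0 + v x 1 * h1
    + (pd 1 (fun y => v y 0) x - pd 0 (fun y => v y 1) x) * hdiv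

section StreamFunction

variable {s : Set E2} {u : E2 → ℝ} {v : E2 → E2}

theorem lapW_eq_curl (hstream : ∀ x ∈ s, pdW s 0 u x = v x 1 ∧ pdW s 1 u x = -(v x 0))
    {x : E2} (hx : x ∈ interior s) : lapW s u x = curl v x := by
  have hs : s ∈ 𝓝 x := mem_interior_iff_mem_nhds.mp hx
  have h0 : pdW s 0 u =ᶠ[𝓝 x] fun y => v y 1 := eventually_of_mem hs fun y hy => (hstream y hy).1
  have h1 : pdW s 1 u =ᶠ[𝓝 x] fun y => -(v y 0) := eventually_of_mem hs fun y hy => (hstream y hy).2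
  simp only [lapW, pdW, Fin.sum_univ_two, curl, pd, fderivWithin_of_mem_nhds hs, h0.fderiv_eq,
    h1.fderiv_eq, fderiv_fun_neg, neg_apply, sub_eq_add_neg]

theorem fderivWithin_lapW_eq_fderiv_curl
    (hstream : ∀ x ∈ s, pdW s 0 u x = v x 1 ∧ pdW s 1 u x = -(v x 0))
    {x : E2} (hx : x ∈ interior s) : fderivWithin ℝ (lapW s u) s x = fderiv ℝ (curl v) x := by
  rw [fderivWithin_of_mem_nhds (mem_interior_iff_mem_nhds.mp hx)]
  exact Filter.EventuallyEq.fderiv_eq <|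
    eventually_of_mem (isOpen_interior.mem_nhds hx) fun y hy => lapW_eq_curl hstream hy

theorem contDiffOn_pdW (hs : UniqueDiffOn ℝ s) {n : WithTop ℕ∞} {f : E2 → ℝ}
    (hf : ContDiffOn ℝ (n + 1) f s) (i : Fin 2) : ContDiffOn ℝ n (pdW s i f) s :=
  (hf.fderivWithin hs le_rfl).clm_apply contDiffOn_const

theorem contDiffOn_lapW (hs : UniqueDiffOn ℝ s) {n : WithTop ℕ∞} (hu : ContDiffOn ℝ (n + 2) u s) :
    ContDiffOn ℝ n (lapW s u) s :=
  ContDiffOn.sum fun i _ =>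
    contDiffOn_pdW hs (contDiffOn_pdW hs (by rwa [add_assoc, one_add_one_eq_two]) i) i

end StreamFunction

theorem uniqueDiffOn_closedBall {E : Type*} [NormedAddCommGroup E] [NormedSpace ℝ E] (x : E)
    {R : ℝ} (hR : 0 < R) : UniqueDiffOn ℝ (closedBall x R) :=
  uniqueDiffOn_convex (convex_closedBall x R)
    ⟨x, ball_subset_interior_closedBall (mem_ball_self hR)⟩

theorem apply_fderivWithin_eq_zero_of_segment {E F G : Type*} [NormedAddCommGroup E]
    [NormedSpace ℝ E] [NormedAddCommGroup F] [NormedSpace ℝ F] [NormedAddCommGroup G]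
    [NormedSpace ℝ G] {s : Set E} {f : E → F} {L : E → F →L[ℝ] G} {x d : E}
    (hf : DifferentiableWithinAt ℝ f s x) (hfx : f x = 0) (hL : ContinuousWithinAt L s x)
    (hseg : ∀ t ∈ Ioo (0 : ℝ) 1, x + t • d ∈ s ∧ L (x + t • d) (f (x + t • d)) = 0) :
    L x (fderivWithin ℝ f s x d) = 0 := by
  let c : ℝ → E := fun t => x + t • d
  have hc : HasDerivAt c d 0 := by
    convert ((hasDerivAt_id' (0 : ℝ)).smul_const d).const_add x using 1; simp
  have hcs : MapsTo c (Ioo 0 1) s := fun t ht => (hseg t ht).1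
  -- `t⁻¹ • f (c t)` is a difference quotient of `f ∘ c` at `0`
  have hslope : Tendsto (fun t => t⁻¹ • f (c t)) (𝓝[Ioo 0 1] 0) (𝓝 (fderivWithin ℝ f s x d)) := by
    have h := hf.hasFDerivWithinAt.comp_hasDerivWithinAt_of_eq 0 hc.hasDerivWithinAt hcs
      (by simp [c])
    refine ((hasDerivWithinAt_iff_tendsto_slope' (by simp)).mp h).congr fun t => ?_
    simp [slope_def_module, c, hfx]
  have hLc : Tendsto (fun t => L (c t)) (𝓝[Ioo 0 1] 0) (𝓝 (L x)) := by
    refine hL.tendsto.comp (tendsto_nhdsWithin_iff.mpr ⟨?_, eventually_mem_nhdsWithin.mono hcs⟩)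
    simpa [c] using (hc.continuousAt.tendsto).mono_left nhdsWithin_le_nhds
  have hlim := (isBoundedBilinearMap_apply.continuous.tendsto _).comp (hLc.prodMk_nhds hslope)
  have : (𝓝[Ioo (0 : ℝ) 1] 0).NeBot := by
    rw [nhdsWithin_Ioo_eq_nhdsGT one_pos]; infer_instance
  refine tendsto_nhds_unique_of_eventuallyEq hlim tendsto_const_nhds ?_
  filter_upwards [self_mem_nhdsWithin] with t ht
  simp [c, (hseg t ht).2]

def rot (x : E2) : E2 := (-x 1) • e2 0 + x 0 • e2 1

def circleE2 (R θ : ℝ) : E2 := (R * Real.cos θ) • e2 0 + (R * Real.sin θ) • e2 1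

@[simp] lemma rot_apply_zero (x : E2) : rot x 0 = -x 1 := by simp [rot, e2_apply]
@[simp] lemma rot_apply_one (x : E2) : rot x 1 = x 0 := by simp [rot, e2_apply]
@[simp] lemma circleE2_apply_zero (R θ : ℝ) : circleE2 R θ 0 = R * Real.cos θ := by
  simp [circleE2, e2_apply]
@[simp] lemma circleE2_apply_one (R θ : ℝ) : circleE2 R θ 1 = R * Real.sin θ := by
  simp [circleE2, e2_apply]

lemma E2.norm_sq (x : E2) : ‖x‖ ^ 2 = x 0 ^ 2 + x 1 ^ 2 := by
  simp [EuclideanSpace.norm_sq_eq, Fin.sum_univ_two]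

lemma norm_circleE2 {R : ℝ} (hR : 0 ≤ R) (θ : ℝ) : ‖circleE2 R θ‖ = R := by
  have h : ‖circleE2 R θ‖ ^ 2 = R ^ 2 := by
    rw [E2.norm_sq]; simp only [circleE2_apply_zero, circleE2_apply_one]
    linear_combination R ^ 2 * Real.cos_sq_add_sin_sq θ
  exact (pow_left_inj₀ (norm_nonneg _) hR two_ne_zero).mp h

lemma circleE2_ne_zero {R : ℝ} (hR : 0 < R) (θ : ℝ) : circleE2 R θ ≠ 0 :=
  norm_ne_zero_iff.mp ((norm_circleE2 hR.le θ).trans_ne hR.ne')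

lemma circleE2_mem_closedBall {R : ℝ} (hR : 0 ≤ R) (θ : ℝ) : circleE2 R θ ∈ closedBall 0 R := by
  simp [norm_circleE2 hR]

lemma exists_circleE2_eq {R : ℝ} {x : E2} (hx : ‖x‖ = R) : ∃ θ, circleE2 R θ = x := by
  let c : ℂ := ⟨x 0, x 1⟩
  have hc : ‖c‖ = R := by
    rw [← hx, Complex.norm_def, Complex.normSq_mk, EuclideanSpace.norm_eq, Fin.sum_univ_two]
    simp [sq]
  have h := Complex.norm_mul_exp_arg_mul_I c
  rw [hc] at h
  refine ⟨c.arg, E2.ext_of_apply ?_ ?_⟩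
  · simpa [Complex.exp_ofReal_mul_I_re] using congrArg Complex.re h
  · simpa [Complex.exp_ofReal_mul_I_im] using congrArg Complex.im h

lemma continuous_circleE2 (R : ℝ) : Continuous (circleE2 R) := by
  unfold circleE2; fun_prop

lemma continuous_rot : Continuous rot := by
  unfold rot; fun_prop

lemma hasDerivAt_circleE2 (R θ : ℝ) : HasDerivAt (circleE2 R) (rot (circleE2 R θ)) θ := by
  have h := (((Real.hasDerivAt_cos θ).const_mul R).smul_const (e2 0)).fun_add
    (((Real.hasDerivAt_sin θ).const_mul R).smul_const (e2 1))
  rwa [show rot (circleE2 R θ) = (R * -Real.sin θ) • e2 0 + (R * Real.cos θ) • e2 1 by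
    simp [rot, mul_neg]]

lemma DifferentiableWithinAt.hasDerivAt_comp_circleE2 {R : ℝ} (hR : 0 ≤ R) {f : E2 → ℝ} {θ : ℝ}
    (hf : DifferentiableWithinAt ℝ f (closedBall 0 R) (circleE2 R θ)) :
    HasDerivAt (fun t => f (circleE2 R t))
      (fderivWithin ℝ f (closedBall 0 R) (circleE2 R θ) (rot (circleE2 R θ))) θ := by
  have h := hf.hasFDerivWithinAt.comp_hasDerivWithinAt θ
    ((hasDerivAt_circleE2 R θ).hasDerivWithinAt (s := univ)) fun t _ => circleE2_mem_closedBall hR t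
  exact hasDerivWithinAt_univ.mp h

lemma exists_eq_smul_rot {w x : E2} (hx : x ≠ 0) (h : ∑ i, w i * x i = 0) :
    ∃ c : ℝ, w = c • rot x := by
  have hx' : x 0 ^ 2 + x 1 ^ 2 ≠ 0 := by
    rw [← E2.norm_sq]; positivity
  simp only [Fin.sum_univ_two] at h
  refine ⟨(x 0 * w 1 - x 1 * w 0) / (x 0 ^ 2 + x 1 ^ 2), E2.ext_of_apply ?_ ?_⟩ <;>
    simp <;> field_simp
  · linear_combination (x 0) * h
  · linear_combination (x 1) * h

lemma apply_rot_eq_zero_of_apply_eq_zero {w x : E2} (hx : x ≠ 0) (hwx : ∑ i, w i * x i = 0)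
    (hw : w ≠ 0) {L : E2 →L[ℝ] ℝ} (hL : L w = 0) : L (rot x) = 0 := by
  obtain ⟨c, rfl⟩ := exists_eq_smul_rot hx hwx
  rw [map_smul, smul_eq_mul] at hL
  exact (mul_eq_zero.mp hL).resolve_left (by rintro rfl; simp at hw)

lemma apply_eq_trace_mul_of_apply_rot_eq_zero {H : E2 →L[ℝ] E2 →L[ℝ] ℝ}
    (hH : H (e2 0) (e2 1) = H (e2 1) (e2 0)) {x : E2} (hx : ∀ i, H (rot x) (e2 i) = 0)
    (i : Fin 2) : H x (e2 i) = (H (e2 0) (e2 0) + H (e2 1) (e2 1)) * x i := by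
  have h0 := hx 0
  have h1 := hx 1
  rw [H.apply_E2] at h0 h1 ⊢
  simp only [rot_apply_zero, rot_apply_one, add_apply, smul_apply, smul_eq_mul] at h0 h1 ⊢
  fin_cases i <;> simp only [Fin.zero_eta, Fin.mk_one]
  · linear_combination -h1 - x 1 * hH
  · linear_combination h0 + x 0 * hH

section WithinDerivatives

variable {s : Set E2} {x : E2}

lemma fderivWithin_coord_apply (hs : UniqueDiffWithinAt ℝ s x) {v : E2 → E2}
    (hv : DifferentiableWithinAt ℝ v s x) (i : Fin 2) (w : E2) :
    fderivWithin ℝ (fun y => v y i) s x w = fderivWithin ℝ v s x w i := by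
  exact congrArg (· w) (((EuclideanSpace.proj (𝕜 := ℝ) i).hasFDerivAt.comp_hasFDerivWithinAt x
    hv.hasFDerivWithinAt).fderivWithin hs)

lemma fderivWithin_pdW_apply (hs : UniqueDiffWithinAt ℝ s x) {f : E2 → ℝ}
    (hf : DifferentiableWithinAt ℝ (fderivWithin ℝ f s) s x) (i : Fin 2) (w : E2) :
    fderivWithin ℝ (pdW s i f) s x w = fderivWithin ℝ (fderivWithin ℝ f s) s x w (e2 i) := by
  exact congrArg (· w) (((ContinuousLinearMap.apply ℝ ℝ (e2 i)).hasFDerivAt.comp_hasFDerivWithinAt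
    x hf.hasFDerivWithinAt).fderivWithin hs)

end WithinDerivatives

theorem fderivWithin_lapW_apply_self {R : ℝ} (hR : 0 < R) {v : E2 → E2} {P u : E2 → ℝ}
    (hv : ContDiffOn ℝ 2 v (closedBall 0 R)) (hP : DifferentiableOn ℝ P (ball 0 R))
    (momentum : ∀ x ∈ ball (0 : E2) R, ∀ i : Fin 2,
      ∑ j, v x j * pd j (fun y => v y i) x = -pd i P x)
    (incomp : ∀ x ∈ ball (0 : E2) R, ∑ i, pd i (fun y => v y i) x = 0)
    (hu : ContDiffOn ℝ 3 u (closedBall 0 R))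
    (hstream : ∀ x ∈ closedBall (0 : E2) R,
      pdW (closedBall 0 R) 0 u x = v x 1 ∧ pdW (closedBall 0 R) 1 u x = -(v x 0))
    {x : E2} (hx : x ∈ closedBall (0 : E2) R) :
    fderivWithin ℝ (lapW (closedBall 0 R) u) (closedBall 0 R) x (v x) = 0 := by
  have hs : UniqueDiffOn ℝ (closedBall (0 : E2) R) := uniqueDiffOn_closedBall 0 hR
  have hinterior : EqOn (fun y => fderivWithin ℝ (lapW (closedBall 0 R) u) (closedBall 0 R) y (v y))
      0 (ball 0 R) := fun y hy => by
    dsimp only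
    rw [fderivWithin_lapW_eq_fderiv_curl hstream (ball_subset_interior_closedBall hy)]
    exact fderiv_curl_apply_self isOpen_ball (hv.mono ball_subset_closedBall) hP momentum
      incomp hy
  refine hinterior.of_subset_closure ?_ continuousOn_const ball_subset_closedBall
    (closure_ball 0 hR.ne').ge hx
  exact ((contDiffOn_lapW hs (n := 1) hu).continuousOn_fderivWithin hs le_rfl).clm_apply
    hv.continuousOn

section Boundary

variable {R : ℝ} {u : E2 → ℝ} {v : E2 → E2}

/-- Where `v` vanishes along the circle, the Hessian of `u` kills the tangent `rot x`, so being
symmetric it is `Δu(x)` times `⟪x, ·⟫`. -/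
theorem fderivWithin_apply_self_eq_lapW_smul_rot (hR : 0 < R)
    (hu : ContDiffOn ℝ 3 u (closedBall 0 R)) (hv : DifferentiableOn ℝ v (closedBall 0 R))
    (hstream : ∀ x ∈ closedBall (0 : E2) R,
      pdW (closedBall 0 R) 0 u x = v x 1 ∧ pdW (closedBall 0 R) 1 u x = -(v x 0))
    {θ : ℝ} (hθ : ∀ᶠ t in 𝓝 θ, v (circleE2 R t) = 0) :
    fderivWithin ℝ v (closedBall 0 R) (circleE2 R θ) (circleE2 R θ) =
      lapW (closedBall 0 R) u (circleE2 R θ) • rot (circleE2 R θ) := by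
  set s := closedBall (0 : E2) R
  set x := circleE2 R θ
  have hs : UniqueDiffOn ℝ s := uniqueDiffOn_closedBall 0 hR
  have hxs : x ∈ s := circleE2_mem_closedBall hR.le θ
  set H := fderivWithin ℝ (fderivWithin ℝ u s) s x
  have hdu : ContDiffOn ℝ 2 (fderivWithin ℝ u s) s := hu.fderivWithin hs (by norm_num)
  have hH : ∀ i w, fderivWithin ℝ (pdW s i u) s x w = H w (e2 i) :=
    fderivWithin_pdW_apply (hs x hxs) (hdu.differentiableOn two_ne_zero x hxs)
  have hsymm : H (e2 0) (e2 1) = H (e2 1) (e2 0) :=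
    (hu.contDiffWithinAt hxs).isSymmSndFDerivWithinAt (by norm_num) hs
      (by rwa [interior_closedBall 0 hR.ne', closure_ball 0 hR.ne']) hxs _ _
  have hrot : ∀ i, H (rot x) (e2 i) = 0 := by
    intro i
    have hd := DifferentiableWithinAt.hasDerivAt_comp_circleE2 hR.le
      (((hdu.clm_apply contDiffOn_const).differentiableOn two_ne_zero) x hxs :
        DifferentiableWithinAt ℝ (pdW s i u) s x)
    have hzero : (fun t => pdW s i u (circleE2 R t)) =ᶠ[𝓝 θ] fun _ => 0 := by
      filter_upwards [hθ] with t ht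
      have h := hstream _ (circleE2_mem_closedBall hR.le t)
      fin_cases i <;> simp [h, ht]
    rw [← hH]
    exact hd.unique ((hasDerivAt_const θ 0).congr_of_eventuallyEq hzero)
  have hlap : lapW s u x = H (e2 0) (e2 0) + H (e2 1) (e2 1) := by
    simp only [lapW, pdW, Fin.sum_univ_two, hH]
  have h0 : fderivWithin ℝ (fun y => v y 0) s x = -fderivWithin ℝ (pdW s 1 u) s x := by
    rw [← fderivWithin_fun_neg (hs x hxs)]
    exact fderivWithin_congr (fun y hy => by simp [(hstream y hy).2])
      (by simp [(hstream x hxs).2])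
  have h1 : fderivWithin ℝ (fun y => v y 1) s x = fderivWithin ℝ (pdW s 0 u) s x :=
    fderivWithin_congr (fun y hy => (hstream y hy).1.symm) (hstream x hxs).1.symm
  refine E2.ext_of_apply ?_ ?_
  · rw [← fderivWithin_coord_apply (hs x hxs) (hv x hxs), h0, neg_apply, hH,
      apply_eq_trace_mul_of_apply_rot_eq_zero hsymm hrot, hlap]
    simp
  · rw [← fderivWithin_coord_apply (hs x hxs) (hv x hxs), h1, hH,
      apply_eq_trace_mul_of_apply_rot_eq_zero hsymm hrot, hlap]
    simp

/-- `v / t` along the inward radius tends to `-Δu(x) rot x`, while `D(Δu) · v = 0`. -/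
theorem lapW_mul_fderivWithin_rot_eq_zero (hR : 0 < R)
    (hu : ContDiffOn ℝ 3 u (closedBall 0 R)) (hv : DifferentiableOn ℝ v (closedBall 0 R))
    (hstream : ∀ x ∈ closedBall (0 : E2) R,
      pdW (closedBall 0 R) 0 u x = v x 1 ∧ pdW (closedBall 0 R) 1 u x = -(v x 0))
    (htransport : ∀ y ∈ closedBall (0 : E2) R,
      fderivWithin ℝ (lapW (closedBall 0 R) u) (closedBall 0 R) y (v y) = 0)
    {θ : ℝ} (hθ : ∀ᶠ t in 𝓝 θ, v (circleE2 R t) = 0) :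
    lapW (closedBall 0 R) u (circleE2 R θ) * fderivWithin ℝ (lapW (closedBall 0 R) u)
      (closedBall 0 R) (circleE2 R θ) (rot (circleE2 R θ)) = 0 := by
  set x := circleE2 R θ
  have hs : UniqueDiffOn ℝ (closedBall (0 : E2) R) := uniqueDiffOn_closedBall 0 hR
  have hxs : x ∈ closedBall (0 : E2) R := circleE2_mem_closedBall hR.le θ
  have hradial := apply_fderivWithin_eq_zero_of_segment (hv x hxs) hθ.self_of_nhds
    ((contDiffOn_lapW hs (n := 1) hu).continuousOn_fderivWithin hs le_rfl x hxs) (d := -x)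
    (fun t ht => by
      have hball : x + t • -x ∈ closedBall (0 : E2) R := by
        rw [mem_closedBall_zero_iff, show x + t • -x = (1 - t) • x by module, norm_smul,
          norm_circleE2 hR.le, Real.norm_of_nonneg (by linarith [ht.2])]
        nlinarith [ht.1]
      exact ⟨hball, htransport _ hball⟩)
  rwa [map_neg, fderivWithin_apply_self_eq_lapW_smul_rot hR hu hv hstream hθ, map_neg, map_smul,
    smul_eq_mul, neg_eq_zero] at hradial

end Boundary

theorem eq_of_forall_eventually_deriv_ne_imp_mul_eq_zero {g g' : ℝ → ℝ}
    (hg : ∀ t, HasDerivAt g (g' t) t) (hg' : Continuous g')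
    (h : ∀ t, (∀ᶠ s in 𝓝 t, g' s ≠ 0) → g t * g' t = 0) (a b : ℝ) : g a = g b := by
  have hzero : ∀ t, g' t = 0 := by
    by_contra! ⟨t, ht⟩
    have hne : ∀ᶠ s in 𝓝 t, g' s ≠ 0 := hg'.continuousAt.eventually_ne ht
    have hg0 : g =ᶠ[𝓝 t] fun _ => 0 := by
      filter_upwards [eventually_eventually_nhds.mpr hne] with s hs
      exact (mul_eq_zero.mp (h s hs)).resolve_right hs.self_of_nhds
    exact ht ((hg t).unique ((hasDerivAt_const t 0).congr_of_eventuallyEq hg0))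
  exact is_const_of_deriv_eq_zero (fun t => (hg t).differentiableAt)
    (fun t => (hg t).deriv.trans (hzero t)) a b

theorem vorticity_constant_on_boundary_general
    (R : ℝ) (hR : 0 < R)
    (v : E2 → E2) (P : E2 → ℝ)
    (hv : ContDiffOn ℝ 2 v (closure (ball (0 : E2) R)))
    (hP : ContDiffOn ℝ 1 P (ball (0 : E2) R))
    -- momentum equation (v·∇)v = -∇P in D, componentwise
    (momentum : ∀ x ∈ ball (0 : E2) R, ∀ i : Fin 2,
      ∑ j, v x j * fderiv ℝ (fun y => v y i) x (e2 j) = - pd i P x)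
    -- incompressibility div v = 0 in D
    (incomp : ∀ x ∈ ball (0 : E2) R,
      ∑ i, fderiv ℝ (fun y => v y i) x (e2 i) = 0)
    -- tangency v·n = 0 on ∂D
    (tangency : ∀ x : E2, ‖x‖ = R → ∑ i, v x i * x i = 0)
    -- u is a stream function of v, of class C³ up to the boundary
    (u : E2 → ℝ) (hu : ContDiffOn ℝ 3 u (closure (ball (0 : E2) R)))
    (hstream : ∀ x ∈ closure (ball (0 : E2) R),
      pdW (closure (ball (0 : E2) R)) 0 u x = v x 1 ∧
      pdW (closure (ball (0 : E2) R)) 1 u x = -(v x 0)) :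
    ∃ d : ℝ, ∀ x : E2, ‖x‖ = R → lapW (closure (ball (0 : E2) R)) u x = d := by
  rw [closure_ball 0 hR.ne'] at hv hu hstream ⊢
  set s := closedBall (0 : E2) R
  have hs : UniqueDiffOn ℝ s := uniqueDiffOn_closedBall 0 hR
  have hω : ContDiffOn ℝ 1 (lapW s u) s := contDiffOn_lapW hs hu
  have hDω : ContinuousOn (fderivWithin ℝ (lapW s u) s) s := hω.continuousOn_fderivWithin hs le_rfl
  have htransport : ∀ y ∈ s, fderivWithin ℝ (lapW s u) s y (v y) = 0 := fun y hy =>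
    fderivWithin_lapW_apply_self hR hv (hP.differentiableOn one_ne_zero) momentum incomp hu
      hstream hy
  have htangential : ∀ θ, v (circleE2 R θ) ≠ 0 →
      fderivWithin ℝ (lapW s u) s (circleE2 R θ) (rot (circleE2 R θ)) = 0 := fun θ hθ =>
    apply_rot_eq_zero_of_apply_eq_zero (circleE2_ne_zero hR θ)
      (tangency _ (norm_circleE2 hR.le θ)) hθ (htransport _ (circleE2_mem_closedBall hR.le θ))
  have hconst := eq_of_forall_eventually_deriv_ne_imp_mul_eq_zero
    (fun θ => DifferentiableWithinAt.hasDerivAt_comp_circleE2 hR.le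
      (hω.differentiableOn one_ne_zero _ (circleE2_mem_closedBall hR.le θ)))
    ((hDω.comp_continuous (continuous_circleE2 R) (circleE2_mem_closedBall hR.le)).clm_apply
      (continuous_rot.comp (continuous_circleE2 R)))
    (fun θ hθ => lapW_mul_fderivWithin_rot_eq_zero hR hu (hv.differentiableOn two_ne_zero)
      hstream htransport (hθ.mono fun t => not_imp_comm.mp (htangential t)))
  refine ⟨lapW s u (circleE2 R 0), fun x hx => ?_⟩
  obtain ⟨θ, rfl⟩ := exists_circleE2_eq hx
  exact hconst θ 0

/-- For a steady Euler flow `v ∈ C²(cl D)` in the disk `D = B(0,R)`, tangential on `∂D`, with a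
unique stagnation point `z ∈ D`, and stream function `u ∈ C³(cl D)` normalized by `u = 0` on `∂D`
and `0 < u < u(z)` in `D \ {z}`, the vorticity `Δu` is constant on the boundary circle `∂D`. -/
theorem vorticity_constant_on_boundary
    (R : ℝ) (hR : 0 < R)
    (v : E2 → E2) (P : E2 → ℝ)
    (hv : ContDiffOn ℝ 2 v (closure (ball (0 : E2) R)))
    (hP : ContDiffOn ℝ 1 P (ball (0 : E2) R))
    -- momentum equation (v·∇)v = -∇P in D, componentwise
    (momentum : ∀ x ∈ ball (0 : E2) R, ∀ i : Fin 2,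
      ∑ j, v x j * fderiv ℝ (fun y => v y i) x (e2 j) = - pd i P x)
    -- incompressibility div v = 0 in D
    (incomp : ∀ x ∈ ball (0 : E2) R,
      ∑ i, fderiv ℝ (fun y => v y i) x (e2 i) = 0)
    -- tangency v·n = 0 on ∂D
    (tangency : ∀ x : E2, ‖x‖ = R → ∑ i, v x i * x i = 0)
    -- z is the only stagnation point of v in D
    (z : E2) (hz : z ∈ ball (0 : E2) R) (hvz : v z = 0)
    (hstag : ∀ x ∈ ball (0 : E2) R, x ≠ z → v x ≠ 0)
    -- u is a stream function of v, of class C³ up to the boundary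
    (u : E2 → ℝ) (hu : ContDiffOn ℝ 3 u (closure (ball (0 : E2) R)))
    (hstream : ∀ x ∈ closure (ball (0 : E2) R),
      pdW (closure (ball (0 : E2) R)) 0 u x = v x 1 ∧
      pdW (closure (ball (0 : E2) R)) 1 u x = -(v x 0))
    -- normalization: u = 0 on ∂D and 0 < u < u(z) in D \ {z}
    (hu_bd : ∀ x : E2, ‖x‖ = R → u x = 0)
    (hu_pos : ∀ x ∈ ball (0 : E2) R, x ≠ z → 0 < u x ∧ u x < u z) :
    ∃ d : ℝ, ∀ x : E2, ‖x‖ = R → lapW (closure (ball (0 : E2) R)) u x = d :=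
  vorticity_constant_on_boundary_general R hR v P hv hP momentum incomp tangency u hu hstream
end
end
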